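/- arXiv:1009.1932 — 3 statements merged into one kernel-verified Lean document; each statement's English description precedes it below -/
import Mathlib

section
/- The vector v = q^{−1/2} e_1⊗e_3 + e_2⊗e_2 + q^{1/2} e_3⊗e_1 in C^3 ⊗ C^3 lies in the kernel of the Izergin–Korepin R-matrix evaluated at x = −q^3: R(−q^3) v = 0. -/
/-- The 9×9 Izergin–Korepin R-matrix `R(x)` of `U_q(A₂⁽²⁾)`, where `sq = q^{1/2}`
is a chosen square root of `q`. Rows/columns are indexed by `Fin 9`
(0-based; index `(i,j)`, `1 ≤ i,j ≤ 3`, corresponds to `3(i−1)+(j−1)`). -/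
noncomputable def IKR {K : Type*} [Field K] (sq x : K) : Matrix (Fin 9) (Fin 9) K :=
  let q : K := sq ^ 2
  let a : K := q * (x - 1) / (q ^ 2 * x - 1)
  let b : K := q ^ 2 * (q * x + 1) * (x - 1) / ((q ^ 2 * x - 1) * (q ^ 3 * x + 1))
  let c : K := q * (x - 1) / (q ^ 2 * x - 1) +
    (q ^ 2 - 1) * (q ^ 3 + 1) * x / ((q ^ 2 * x - 1) * (q ^ 3 * x + 1))
  let d : K := (q ^ 2 - 1) / (q ^ 2 * x - 1)
  let e : K := (q ^ 2 - 1) * (x - 1) * sq / ((q ^ 2 * x - 1) * (q ^ 3 * x + 1))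
  let f : K := (q ^ 2 - 1) * x / (q ^ 2 * x - 1)
  let g : K := (1 - q ^ 2) * x * (x - 1) * sq ^ 5 / ((q ^ 2 * x - 1) * (q ^ 3 * x + 1))
  let p : K := (q ^ 2 - 1) * (q ^ 3 * x + q * x - q + 1) / ((q ^ 2 * x - 1) * (q ^ 3 * x + 1))
  let s : K := (q ^ 2 - 1) * x * (q ^ 3 * x - q ^ 2 * x + q ^ 2 + 1) /
    ((q ^ 2 * x - 1) * (q ^ 3 * x + 1))
  !![1, 0, 0, 0, 0, 0, 0, 0, 0;
     0, a, 0, d, 0, 0, 0, 0, 0;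
     0, 0, b, 0, e, 0, p, 0, 0;
     0, f, 0, a, 0, 0, 0, 0, 0;
     0, 0, g, 0, c, 0, e, 0, 0;
     0, 0, 0, 0, 0, a, 0, d, 0;
     0, 0, s, 0, g, 0, b, 0, 0;
     0, 0, 0, 0, 0, f, 0, a, 0;
     0, 0, 0, 0, 0, 0, 0, 0, 1]

/-! `R(x)` only mixes basis vectors `eᵢ ⊗ eⱼ` with the same `i + j`, so on the span of
`e₁⊗e₃, e₂⊗e₂, e₃⊗e₁` it acts by its 3×3 block in rows and columns 3, 5, 7 (0-based 2, 4, 6).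
At `x = −q³` the common denominator is `(−q⁵ − 1)(1 − q⁶)`, and each row of that block kills
`(q^{−1/2}, 1, q^{1/2})` by a polynomial identity in `q^{1/2}`. -/

section
variable {K : Type*} [Field K]

theorem IKR_mulVec_of_weight_four (sq x u w z : K) :
    (IKR sq x).mulVec ![0, 0, u, 0, w, 0, z, 0, 0] =
      ![0, 0, IKR sq x 2 2 * u + IKR sq x 2 4 * w + IKR sq x 2 6 * z,
        0, IKR sq x 4 2 * u + IKR sq x 4 4 * w + IKR sq x 4 6 * z,
        0, IKR sq x 6 2 * u + IKR sq x 6 4 * w + IKR sq x 6 6 * z, 0, 0] := by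
  ext r
  fin_cases r <;> simp [Matrix.mulVec, dotProduct, Fin.sum_univ_succ, IKR, add_assoc]

variable {sq : K} (h5 : (sq ^ 2) ^ 5 ≠ -1) (h6 : (sq ^ 2) ^ 6 ≠ 1)
include h5 h6

theorem IKR_denominators_ne_zero_at_neg_cube :
    (sq ^ 2) ^ 2 * -(sq ^ 2) ^ 3 - 1 ≠ 0 ∧ (sq ^ 2) ^ 3 * -(sq ^ 2) ^ 3 + 1 ≠ 0 :=
  ⟨fun h => h5 (by linear_combination -h), fun h => h6 (by linear_combination -h)⟩

theorem IKR_neg_cube_row_two :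
    IKR sq (-(sq ^ 2) ^ 3) 2 2 * sq⁻¹ + IKR sq (-(sq ^ 2) ^ 3) 2 4 * 1
      + IKR sq (-(sq ^ 2) ^ 3) 2 6 * sq = 0 := by
  obtain ⟨hA, hB⟩ := IKR_denominators_ne_zero_at_neg_cube h5 h6
  simp only [IKR, Matrix.of_apply, Matrix.cons_val]
  field_simp
  ring

theorem IKR_neg_cube_row_four :
    IKR sq (-(sq ^ 2) ^ 3) 4 2 * sq⁻¹ + IKR sq (-(sq ^ 2) ^ 3) 4 4 * 1
      + IKR sq (-(sq ^ 2) ^ 3) 4 6 * sq = 0 := by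
  obtain ⟨hA, hB⟩ := IKR_denominators_ne_zero_at_neg_cube h5 h6
  simp only [IKR, Matrix.of_apply, Matrix.cons_val]
  rw [div_add_div _ _ hA (mul_ne_zero hA hB)]
  field_simp
  ring

theorem IKR_neg_cube_row_six :
    IKR sq (-(sq ^ 2) ^ 3) 6 2 * sq⁻¹ + IKR sq (-(sq ^ 2) ^ 3) 6 4 * 1
      + IKR sq (-(sq ^ 2) ^ 3) 6 6 * sq = 0 := by
  obtain ⟨hA, hB⟩ := IKR_denominators_ne_zero_at_neg_cube h5 h6
  simp only [IKR, Matrix.of_apply, Matrix.cons_val]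
  field_simp
  ring

end

theorem IKR_kernel_vector_general (sq : ℂ)
    (h5 : (sq ^ 2) ^ 5 ≠ -1) (h6 : (sq ^ 2) ^ 6 ≠ 1) :
    (IKR sq (-(sq ^ 2) ^ 3)).mulVec
      (fun r : Fin 9 =>
        if r = 2 then sq⁻¹ else if r = 4 then 1 else if r = 6 then sq else 0) = 0 := by
  have hv : (fun r : Fin 9 =>
      if r = 2 then sq⁻¹ else if r = 4 then (1 : ℂ) else if r = 6 then sq else 0)
      = ![0, 0, sq⁻¹, 0, 1, 0, sq, 0, 0] := by
    ext r
    fin_cases r <;> rfl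
  rw [hv, IKR_mulVec_of_weight_four, IKR_neg_cube_row_two h5 h6, IKR_neg_cube_row_four h5 h6,
    IKR_neg_cube_row_six h5 h6]
  ext r
  fin_cases r <;> rfl

/-- The vector `v = q^{−1/2} e₁⊗e₃ + e₂⊗e₂ + q^{1/2} e₃⊗e₁` lies in the kernel
of the Izergin–Korepin R-matrix at `x = −q³`: `R(−q³) v = 0`. Here `sq = q^{1/2}`
and indices `(i,j) ↦ 3(i−1)+j`, so `v` is supported at positions 3, 5, 7 (1-based). -/
theorem IKR_kernel_vector (sq : ℂ) (hsq : sq ≠ 0) (h2 : (sq ^ 2) ^ 2 ≠ 1)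
    (h5 : (sq ^ 2) ^ 5 ≠ -1) (h6 : (sq ^ 2) ^ 6 ≠ 1) :
    (IKR sq (-(sq ^ 2) ^ 3)).mulVec
      (fun r : Fin 9 =>
        if r = 2 then sq⁻¹ else if r = 4 then 1 else if r = 6 then sq else 0) = 0 :=
  IKR_kernel_vector_general sq h5 h6
end

section
/- For q a complex number that is not a root of unity (and q ≠ 0), the kernel of the 9×9 matrix R(−q^3) is exactly one-dimensional, spanned by v = q^{−1/2} e_1⊗e_3 + e_2⊗e_2 + q^{1/2} e_3⊗e_1; equivalently, R(−q^3) has rank 8. -/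
open Matrix

section

variable {K : Type*} [Field K]

theorem pow_ne_one_of_dvd {M : Type*} [Monoid M] {q : M} {m n : ℕ} (h : q ^ n ≠ 1)
    (hmn : m ∣ n) : q ^ m ≠ 1 := by
  obtain ⟨k, rfl⟩ := hmn
  intro hm
  exact h (by rw [pow_mul, hm, one_pow])

theorem pow_ne_neg_one_of_pow_two_mul_ne_one {R : Type*} [Ring R] {q : R} {m : ℕ}
    (h : q ^ (2 * m) ≠ 1) : q ^ m ≠ -1 := by
  intro hm
  exact h (by rw [mul_comm, pow_mul, hm, neg_one_sq])

theorem eq_zero_of_det_ne_zero_fin_two {a b c d x y : K} (h₁ : a * x + b * y = 0)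
    (h₂ : c * x + d * y = 0) (hdet : a * d - b * c ≠ 0) : x = 0 ∧ y = 0 :=
  ⟨(mul_eq_zero.mp (by linear_combination d * h₁ - b * h₂)).resolve_left hdet,
    (mul_eq_zero.mp (by linear_combination a * h₂ - c * h₁)).resolve_left hdet⟩

theorem eq_mul_of_det_ne_zero_fin_two {a b c d e f α β x y z : K}
    (hα : a * α + b + c * β = 0) (hβ : d * α + e + f * β = 0)
    (h₁ : a * x + b * y + c * z = 0) (h₂ : d * x + e * y + f * z = 0)
    (hdet : a * f - c * d ≠ 0) : x = y * α ∧ z = y * β := by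
  obtain ⟨hx, hz⟩ := eq_zero_of_det_ne_zero_fin_two (x := x - y * α) (y := z - y * β)
    (by linear_combination h₁ - y * hα) (by linear_combination h₂ - y * hβ) hdet
  exact ⟨sub_eq_zero.mp hx, sub_eq_zero.mp hz⟩

theorem ker_mulVecLin_smul {n : Type*} [Fintype n] {c : K} (hc : c ≠ 0) (M : Matrix n n K) :
    LinearMap.ker (c • M).mulVecLin = LinearMap.ker M.mulVecLin := by
  ext w
  simp only [LinearMap.mem_ker, mulVecLin_apply, smul_mulVec, smul_eq_zero, hc, false_or]

theorem rank_add_one_of_ker_mulVecLin_eq_span {n : Type*} [Fintype n] {M : Matrix n n K}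
    {v : n → K} (hv : v ≠ 0) (h : LinearMap.ker M.mulVecLin = Submodule.span K {v}) :
    M.rank + 1 = Fintype.card n := by
  have := LinearMap.finrank_range_add_finrank_ker M.mulVecLin
  rwa [h, finrank_span_singleton hv, Module.finrank_fintype_fun_eq_card] at this

/-- The sparsity pattern of the Izergin–Korepin R-matrix with free entries: `IKR sq x` is
`ikMatrix 1 a b c d e f g p s` for its entries `a, …, s`. -/
def ikMatrix (u a b c d e f g p s : K) : Matrix (Fin 9) (Fin 9) K :=
  !![u, 0, 0, 0, 0, 0, 0, 0, 0;
     0, a, 0, d, 0, 0, 0, 0, 0;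
     0, 0, b, 0, e, 0, p, 0, 0;
     0, f, 0, a, 0, 0, 0, 0, 0;
     0, 0, g, 0, c, 0, e, 0, 0;
     0, 0, 0, 0, 0, a, 0, d, 0;
     0, 0, s, 0, g, 0, b, 0, 0;
     0, 0, 0, 0, 0, f, 0, a, 0;
     0, 0, 0, 0, 0, 0, 0, 0, u]

theorem smul_ikMatrix (r u a b c d e f g p s : K) :
    r • ikMatrix u a b c d e f g p s =
      ikMatrix (r * u) (r * a) (r * b) (r * c) (r * d) (r * e) (r * f) (r * g) (r * p) (r * s) := by
  ext i j
  fin_cases i <;> fin_cases j <;> simp [ikMatrix]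

theorem ikMatrix_mulVec_eq_zero_iff {u a b c d e f g p s : K} {w : Fin 9 → K} :
    ikMatrix u a b c d e f g p s *ᵥ w = 0 ↔
      u * w 0 = 0 ∧ a * w 1 + d * w 3 = 0 ∧ b * w 2 + e * w 4 + p * w 6 = 0 ∧
      f * w 1 + a * w 3 = 0 ∧ g * w 2 + c * w 4 + e * w 6 = 0 ∧ a * w 5 + d * w 7 = 0 ∧
      s * w 2 + g * w 4 + b * w 6 = 0 ∧ f * w 5 + a * w 7 = 0 ∧ u * w 8 = 0 := by
  simp only [funext_iff, Fin.forall_fin_succ, IsEmpty.forall_iff, and_true]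
  simp [ikMatrix, mulVec, dotProduct, Fin.sum_univ_succ, add_assoc, -mul_eq_zero]

theorem ker_ikMatrix {u a b c d e f g p s α β : K} (hu : u ≠ 0) (hadf : a * a - d * f ≠ 0)
    (hbepg : b * e - p * g ≠ 0) (h₂ : b * α + e + p * β = 0) (h₄ : g * α + c + e * β = 0)
    (h₆ : s * α + g + b * β = 0) :
    LinearMap.ker (ikMatrix u a b c d e f g p s).mulVecLin =
      Submodule.span K {![0, 0, α, 0, 1, 0, β, 0, 0]} := by
  ext w
  rw [LinearMap.mem_ker, mulVecLin_apply, ikMatrix_mulVec_eq_zero_iff,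
    Submodule.mem_span_singleton]
  constructor
  · rintro ⟨r₀, r₁, r₂, r₃, r₄, r₅, r₆, r₇, r₈⟩
    have hw₀ := (mul_eq_zero.mp r₀).resolve_left hu
    have hw₈ := (mul_eq_zero.mp r₈).resolve_left hu
    obtain ⟨hw₁, hw₃⟩ := eq_zero_of_det_ne_zero_fin_two r₁ r₃ hadf
    obtain ⟨hw₅, hw₇⟩ := eq_zero_of_det_ne_zero_fin_two r₅ r₇ hadf
    obtain ⟨hw₂, hw₆⟩ := eq_mul_of_det_ne_zero_fin_two h₂ h₄ r₂ r₄ hbepg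
    refine ⟨w 4, funext fun i => ?_⟩
    fin_cases i <;> simp [*, mul_comm]
  · rintro ⟨t, rfl⟩
    simp only [Nat.succ_eq_add_one, Nat.reduceAdd, Fin.isValue, Pi.smul_apply, cons_val_zero,
      smul_eq_mul, mul_zero, cons_val_one, cons_val, add_zero, mul_one, and_self, and_true, true_and]
    refine ⟨?_, ?_, ?_⟩
    · linear_combination t * h₂
    · linear_combination t * h₄
    · linear_combination t * h₆

theorem IKR_neg_cube {q sq : K} (hq : sq ^ 2 = q) (h₅ : 1 + q ^ 5 ≠ 0) (h₃ : 1 - q ^ 3 ≠ 0)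
    (h₃' : 1 + q ^ 3 ≠ 0) :
    IKR sq (-q ^ 3) = ((1 + q ^ 5) * (1 - q ^ 3))⁻¹ •
      ikMatrix ((1 + q ^ 5) * (1 - q ^ 3)) (q * (1 - q ^ 6)) ((1 - q ^ 2) * q ^ 2 * (q ^ 2 + 1))
        ((1 - q ^ 2) * q * (q ^ 4 + 1)) ((1 - q ^ 2) * (1 - q ^ 3)) ((q ^ 2 - 1) * sq)
        ((q ^ 2 - 1) * q ^ 3 * (1 - q ^ 3)) ((q ^ 2 - 1) * q ^ 3 * sq ^ 5)
        ((q ^ 2 - 1) * (q ^ 3 + q - 1)) ((q ^ 2 - 1) * q ^ 3 * (1 + q ^ 2 - q ^ 3)) := by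
  have hx₁ : q ^ 2 * -q ^ 3 - 1 = -(1 + q ^ 5) := by ring
  have hx₂ : q ^ 3 * -q ^ 3 + 1 = (1 - q ^ 3) * (1 + q ^ 3) := by ring
  rw [smul_ikMatrix]
  show ikMatrix 1 _ _ _ _ _ _ _ _ _ = _
  congr 1
  · exact (inv_mul_cancel₀ (mul_ne_zero h₅ h₃)).symm
  all_goals simp only [hq, hx₁, hx₂]
  all_goals field_simp
  all_goals ring

theorem ker_IKR_neg_cube {q sq : K} (hsq : sq ≠ 0) (hq : sq ^ 2 = q) (h₆ : q ^ 6 ≠ 1)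
    (h₁₀ : q ^ 10 ≠ 1) :
    LinearMap.ker (IKR sq (-q ^ 3)).mulVecLin =
      Submodule.span K {![0, 0, sq⁻¹, 0, 1, 0, sq, 0, 0]} := by
  have hq₀ : q ≠ 0 := hq ▸ pow_ne_zero 2 hsq
  have hq₁ : q + 1 ≠ 0 := fun h => pow_ne_neg_one_of_pow_two_mul_ne_one (m := 1)
    (pow_ne_one_of_dvd h₆ (by norm_num)) (by linear_combination h)
  have hq₂ : q ^ 2 - 1 ≠ 0 := sub_ne_zero.mpr (pow_ne_one_of_dvd h₆ (by norm_num))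
  have hq₃ : 1 - q ^ 3 ≠ 0 := sub_ne_zero.mpr (pow_ne_one_of_dvd h₆ (by norm_num)).symm
  have hq₃' : 1 + q ^ 3 ≠ 0 := fun h =>
    pow_ne_neg_one_of_pow_two_mul_ne_one (m := 3) h₆ (by linear_combination h)
  have hq₅ : 1 + q ^ 5 ≠ 0 := fun h =>
    pow_ne_neg_one_of_pow_two_mul_ne_one (m := 5) h₁₀ (by linear_combination h)
  rw [IKR_neg_cube hq hq₅ hq₃ hq₃', ker_mulVecLin_smul (inv_ne_zero (mul_ne_zero hq₅ hq₃))]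
  apply ker_ikMatrix (mul_ne_zero hq₅ hq₃)
  · convert_to q ^ 2 * (1 - q ^ 3) ^ 2 * (q + 1) * (1 + q ^ 5) ≠ 0 using 2
    · ring
    · exact mul_ne_zero (mul_ne_zero (mul_ne_zero (pow_ne_zero 2 hq₀) (pow_ne_zero 2 hq₃)) hq₁) hq₅
  · convert_to (q ^ 2 - 1) * q ^ 2 * sq * (1 - q ^ 3) * (1 + q ^ 5) ≠ 0 using 2
    · rw [← hq]; ring
    · exact mul_ne_zero (mul_ne_zero (mul_ne_zero (mul_ne_zero hq₂ (pow_ne_zero 2 hq₀)) hsq) hq₃) hq₅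
  all_goals subst hq; field_simp; ring

end

/-- For `q` not a root of unity, the kernel of the 9×9 matrix `R(−q³)` is exactly
one-dimensional, spanned by `v = q^{−1/2} e₁⊗e₃ + e₂⊗e₂ + q^{1/2} e₃⊗e₁`;
equivalently, `R(−q³)` has rank 8. -/
theorem IKR_kernel_span (sq : ℂ) (hsq : sq ≠ 0)
    (hroot : ∀ n : ℕ, 0 < n → (sq ^ 2) ^ n ≠ 1) :
    LinearMap.ker (Matrix.mulVecLin (IKR sq (-(sq ^ 2) ^ 3))) =
      Submodule.span ℂ {fun r : Fin 9 =>
        if r = 2 then sq⁻¹ else if r = 4 then 1 else if r = 6 then sq else 0} ∧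
    (IKR sq (-(sq ^ 2) ^ 3)).rank = 8 := by
  have hv : (fun r : Fin 9 => if r = 2 then sq⁻¹ else if r = 4 then 1 else if r = 6 then sq else 0)
      = ![0, 0, sq⁻¹, 0, 1, 0, sq, 0, 0] := by
    funext r
    fin_cases r <;> rfl
  have hker := ker_IKR_neg_cube hsq rfl (hroot 6 (by norm_num)) (hroot 10 (by norm_num))
  rw [hv]
  refine ⟨hker, ?_⟩
  have := rank_add_one_of_ker_mulVecLin_eq_span (by simp) hker
  simpa using this
end

section
/- The vector v = q^{−1/2} e_1⊗e_3 + e_2⊗e_2 + q^{1/2} e_3⊗e_1 is annihilated by the coproducts of all four Chevalley generators evaluated at spectral parameters (z, −q^{−3}z). Explicitly: (i) (E ⊗ I + K_α ⊗ E) v = 0; (ii) (I ⊗ F + F ⊗ K_α^{−1}) v = 0; (iii) (X_z ⊗ I + K_{δ−2α} ⊗ X_{−q^{−3}z}) v = 0; (iv) (I ⊗ Y_{−q^{−3}z} + Y_z ⊗ K_{δ−2α}^{−1}) v = 0. -/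
open Kronecker

set_option maxHeartbeats 1000000 in
/-- The vector `v = q^{−1/2} e₁⊗e₃ + e₂⊗e₂ + q^{1/2} e₃⊗e₁` is annihilated by the
coproducts of all four Chevalley generators of `U_q(A₂⁽²⁾)` evaluated at spectral
parameters `(z, −q⁻³z)`. Here `r = q^{1/4}` (so `q^{1/2} = r²`, `q = r⁴`),
`t = √(q+q⁻¹)`, `z ≠ 0`. -/
theorem coproduct_kills_kernel_vector (r t z : ℂ) (hr : r ≠ 0) (hz : z ≠ 0)
    (ht : t ^ 2 = r ^ 4 + (r ^ 4)⁻¹)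
    (E F Xz Xw Yz Yw Ka Kd : Matrix (Fin 3) (Fin 3) ℂ)
    (hE : E = !![0, r, 0; 0, 0, -r⁻¹; 0, 0, 0])
    (hF : F = !![0, 0, 0; r⁻¹, 0, 0; 0, -r, 0])
    (hXz : Xz = !![0, 0, 0; 0, 0, 0; t * z, 0, 0])
    (hXw : Xw = !![0, 0, 0; 0, 0, 0; t * (-((r ^ 4) ^ 3)⁻¹ * z), 0, 0])
    (hYz : Yz = !![0, 0, t * z⁻¹; 0, 0, 0; 0, 0, 0])
    (hYw : Yw = !![0, 0, t * (-((r ^ 4) ^ 3)⁻¹ * z)⁻¹; 0, 0, 0; 0, 0, 0])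
    (hKa : Ka = !![r ^ 4, 0, 0; 0, 1, 0; 0, 0, (r ^ 4)⁻¹])
    (hKd : Kd = !![((r ^ 4) ^ 2)⁻¹, 0, 0; 0, 1, 0; 0, 0, (r ^ 4) ^ 2])
    (v : Fin 3 × Fin 3 → ℂ)
    (hv : v = fun p => if p = (0, 2) then (r ^ 2)⁻¹ else if p = (1, 1) then 1
      else if p = (2, 0) then r ^ 2 else 0) :
    (E ⊗ₖ (1 : Matrix (Fin 3) (Fin 3) ℂ) + Ka ⊗ₖ E).mulVec v = 0 ∧
    ((1 : Matrix (Fin 3) (Fin 3) ℂ) ⊗ₖ F + F ⊗ₖ Ka⁻¹).mulVec v = 0 ∧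
    (Xz ⊗ₖ (1 : Matrix (Fin 3) (Fin 3) ℂ) + Kd ⊗ₖ Xw).mulVec v = 0 ∧
    ((1 : Matrix (Fin 3) (Fin 3) ℂ) ⊗ₖ Yw + Yz ⊗ₖ Kd⁻¹).mulVec v = 0 := by
  have hr4 : (r ^ 4 : ℂ) ≠ 0 := pow_ne_zero _ hr
  have hKai : Ka⁻¹ = !![(r ^ 4)⁻¹, 0, 0; 0, 1, 0; 0, 0, r ^ 4] := by
    apply Matrix.inv_eq_right_inv
    rw [hKa]
    ext i j
    fin_cases i <;> fin_cases j <;>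
      simp [Matrix.mul_apply, Fin.sum_univ_succ, Matrix.one_apply] <;>
      field_simp
  have hKdi : Kd⁻¹ = !![(r ^ 4) ^ 2, 0, 0; 0, 1, 0; 0, 0, ((r ^ 4) ^ 2)⁻¹] := by
    apply Matrix.inv_eq_right_inv
    rw [hKd]
    ext i j
    fin_cases i <;> fin_cases j <;>
      simp [Matrix.mul_apply, Fin.sum_univ_succ, Matrix.one_apply] <;>
      field_simp
  subst hE hF hXz hXw hYz hYw hKa hKd hv
  refine ⟨?_, ?_, ?_, ?_⟩ <;>
  · ext ⟨i, j⟩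
    fin_cases i <;> fin_cases j <;>
      simp [hKai, hKdi, Matrix.mulVec, dotProduct, Prod.ext_iff,
        Matrix.kroneckerMap_apply, Fintype.sum_prod_type, Fin.sum_univ_succ,
        Matrix.one_apply, Matrix.vecHead, Matrix.vecTail] <;>
      field_simp <;>
      ring
end
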